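/- Let F be a sparseness measure with cost function J on ℝⁿ, let A be an m×n real matrix, let k ≥ 1, and let σmax > 0 be such that ‖A u‖ ≤ σmax‖u‖ for every u ∈ ℝⁿ. If for some d with 0 < d < 1/2 the matrix A satisfies RRC at sparsity k for J with constant C = 2(1−2d)/(d σmax), then every linear subspace ν' of ℝⁿ with dim ν' = dim(ker A) and ‖P_{ker A} − P_{ν'}‖ ≤ d satisfies NSP at sparsity k for J. -/

import Mathlib

noncomputable section

/-- `F : ℝ → ℝ` is a sparseness measure: nonnegative on `[0,∞)`,
vanishing exactly at `0`, and `F (|·|)` is subadditive on `ℝ`. -/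
def SparsenessMeasure (F : ℝ → ℝ) : Prop :=
  (∀ t : ℝ, 0 ≤ t → 0 ≤ F t) ∧
  (∀ t : ℝ, 0 ≤ t → (F t = 0 ↔ t = 0)) ∧
  (∀ x y : ℝ, F |x + y| ≤ F |x| + F |y|)

/-- The cost function `J(x) = ∑ i, F |x i|` on `ℝⁿ`. -/
def costJ {n : ℕ} (F : ℝ → ℝ) (x : EuclideanSpace ℝ (Fin n)) : ℝ :=
  ∑ i, F |x i|

/-- The restricted cost `J(x_T) = ∑ i ∈ T, F |x i|`. -/
def costJT {n : ℕ} (F : ℝ → ℝ) (T : Finset (Fin n)) (x : EuclideanSpace ℝ (Fin n)) : ℝ :=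
  ∑ i ∈ T, F |x i|

/-- `x` has at most `k` nonzero entries. -/
def Sparse {n : ℕ} (k : ℕ) (x : EuclideanSpace ℝ (Fin n)) : Prop :=
  ∃ T : Finset (Fin n), T.card ≤ k ∧ ∀ i ∉ T, x i = 0

/-- The matrix `A` acting as a continuous linear map between Euclidean spaces. -/
def mulVecCLM {m n : ℕ} (A : Matrix (Fin m) (Fin n) ℝ) :
    EuclideanSpace ℝ (Fin n) →L[ℝ] EuclideanSpace ℝ (Fin m) :=
  (((EuclideanSpace.equiv (Fin m) ℝ).symm : (Fin m → ℝ) →L[ℝ] EuclideanSpace ℝ (Fin m)).comp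
    (Matrix.mulVecLin A).toContinuousLinearMap).comp
    ((EuclideanSpace.equiv (Fin n) ℝ) : EuclideanSpace ℝ (Fin n) →L[ℝ] (Fin n → ℝ))

/-- `A` satisfies the robust recovery condition at sparsity `k` for the cost `J_F`
with constant `C`: for every `k`-sparse `x̄`, every `ε > 0`, every noise `v` with
`‖v‖ ≤ ε`, and every feasible `x̂` with `J(x̂) ≤ J(x̄)`, one has `‖x̄ - x̂‖ ≤ C ε`. -/
def RRC {m n : ℕ} (A : Matrix (Fin m) (Fin n) ℝ) (k : ℕ) (F : ℝ → ℝ) (C : ℝ) : Prop :=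
  ∀ xbar : EuclideanSpace ℝ (Fin n), Sparse k xbar →
    ∀ ε : ℝ, 0 < ε →
      ∀ v : EuclideanSpace ℝ (Fin m), ‖v‖ ≤ ε →
        ∀ xhat : EuclideanSpace ℝ (Fin n),
          ‖mulVecCLM A xhat - (mulVecCLM A xbar + v)‖ ≤ ε →
            costJ F xhat ≤ costJ F xbar → ‖xbar - xhat‖ ≤ C * ε

/-- The robust null space condition with parameter `d` for `(A, k, J_F)`. -/
def RNSP {m n : ℕ} (A : Matrix (Fin m) (Fin n) ℝ) (k : ℕ) (F : ℝ → ℝ) (d : ℝ) : Prop :=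
  ∀ z ∈ LinearMap.ker (mulVecCLM A : EuclideanSpace ℝ (Fin n) →ₗ[ℝ] EuclideanSpace ℝ (Fin m)), z ≠ 0 →
    ∀ η : EuclideanSpace ℝ (Fin n), ‖η‖ < d * ‖z‖ →
      ∀ T : Finset (Fin n), T.card ≤ k →
        costJT F T (z + η) < costJT F Tᶜ (z + η)

/-- The subspace `ν` satisfies the null space property at sparsity `k` for `J_F`. -/
def NSP {n : ℕ} (ν : Submodule ℝ (EuclideanSpace ℝ (Fin n))) (k : ℕ) (F : ℝ → ℝ) : Prop :=
  ∀ z ∈ ν, z ≠ 0 → ∀ T : Finset (Fin n), T.card ≤ k → costJT F T z < costJT F Tᶜ z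

/-- The orthogonal projection onto `ν`, as a continuous linear map `ℝⁿ → ℝⁿ`. -/
def projCLM {n : ℕ} (ν : Submodule ℝ (EuclideanSpace ℝ (Fin n))) :
    EuclideanSpace ℝ (Fin n) →L[ℝ] EuclideanSpace ℝ (Fin n) :=
  ν.subtypeL.comp (ν.orthogonalProjectionOnto)

/-!
If `z ∈ ν'` violated the null space property on `T`, then `x̄ = z_T` and `x̂ = -z_{Tᶜ}` would be
a `k`-sparse signal and a competitor with `J(x̂) ≤ J(x̄)` and `x̄ - x̂ = z`. Since `ν'` is
`d`-close to `ker A`, `z` is within `d‖z‖` of its projection onto `ker A`, so `‖A z‖ ≤ σmax d ‖z‖`;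
splitting `A z` evenly between noise and residual makes `x̂` feasible at noise level
`ε = σmax d ‖z‖ / 2`. RRC then gives `‖z‖ ≤ C ε = (1 - 2d) ‖z‖`, impossible for `z ≠ 0`.
-/

open Finset

section

variable {m n : ℕ}

def restrictTo (T : Finset (Fin n)) (x : EuclideanSpace ℝ (Fin n)) : EuclideanSpace ℝ (Fin n) :=
  WithLp.toLp 2 fun i => if i ∈ T then x i else 0

@[simp]
theorem restrictTo_apply (T : Finset (Fin n)) (x : EuclideanSpace ℝ (Fin n)) (i : Fin n) :
    restrictTo T x i = if i ∈ T then x i else 0 :=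
  rfl

theorem restrictTo_add_restrictTo_compl (T : Finset (Fin n)) (x : EuclideanSpace ℝ (Fin n)) :
    restrictTo T x + restrictTo Tᶜ x = x := by
  ext i
  by_cases h : i ∈ T <;> simp [h]

theorem sparse_restrictTo {k : ℕ} {T : Finset (Fin n)} (hT : T.card ≤ k)
    (x : EuclideanSpace ℝ (Fin n)) : Sparse k (restrictTo T x) :=
  ⟨T, hT, fun i hi => by simp [hi]⟩

theorem SparsenessMeasure.map_zero {F : ℝ → ℝ} (hF : SparsenessMeasure F) : F 0 = 0 :=
  (hF.2.1 0 le_rfl).mpr rfl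

theorem costJ_restrictTo {F : ℝ → ℝ} (hF0 : F 0 = 0) (T : Finset (Fin n))
    (x : EuclideanSpace ℝ (Fin n)) : costJ F (restrictTo T x) = costJT F T x := by
  simp only [costJ, costJT, restrictTo_apply, apply_ite, abs_zero, hF0]
  rw [sum_ite_mem, univ_inter]

theorem costJ_neg (F : ℝ → ℝ) (x : EuclideanSpace ℝ (Fin n)) : costJ F (-x) = costJ F x := by
  simp [costJ]

/-- The recovery condition, tested on `x̄ = z_T` and `x̂ = -z_{Tᶜ}`, bounds any `z` whose cost
is concentrated on a small set `T` by the size of `A z`. -/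
theorem RRC.norm_le_of_costJT_compl_le {A : Matrix (Fin m) (Fin n) ℝ} {k : ℕ} {F : ℝ → ℝ}
    {C : ℝ} (hrrc : RRC A k F C) (hF0 : F 0 = 0) {T : Finset (Fin n)} (hT : T.card ≤ k)
    {z : EuclideanSpace ℝ (Fin n)} (hcost : costJT F Tᶜ z ≤ costJT F T z) {ε : ℝ}
    (hε : 0 < ε) (hAz : ‖mulVecCLM A z‖ ≤ 2 * ε) : ‖z‖ ≤ C * ε := by
  have hdiff : restrictTo T z - -restrictTo Tᶜ z = z := by
    rw [sub_neg_eq_add, restrictTo_add_restrictTo_compl]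
  have hnoise : ‖-((2 : ℝ)⁻¹ • mulVecCLM A z)‖ ≤ ε := by
    rw [norm_neg, norm_smul, Real.norm_of_nonneg (by norm_num)]
    linarith
  have hresidual : mulVecCLM A (-restrictTo Tᶜ z)
      - (mulVecCLM A (restrictTo T z) + -((2 : ℝ)⁻¹ • mulVecCLM A z))
      = -((2 : ℝ)⁻¹ • mulVecCLM A z) := by
    have hsplit : mulVecCLM A z
        = mulVecCLM A (restrictTo T z) - mulVecCLM A (-restrictTo Tᶜ z) := by
      rw [← map_sub, hdiff]
    rw [hsplit]
    module
  have h := hrrc _ (sparse_restrictTo hT z) ε hε _ hnoise _ (hresidual ▸ hnoise)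
    (by rwa [costJ_neg, costJ_restrictTo hF0, costJ_restrictTo hF0])
  rwa [hdiff] at h

end

theorem norm_sub_starProjection_le_of_mem {𝕜 E : Type*} [RCLike 𝕜] [NormedAddCommGroup E]
    [InnerProductSpace 𝕜 E] (K U : Submodule 𝕜 E) [K.HasOrthogonalProjection]
    [U.HasOrthogonalProjection] {z : E} (hz : z ∈ U) :
    ‖z - K.starProjection z‖ ≤ ‖K.starProjection - U.starProjection‖ * ‖z‖ := by
  calc ‖z - K.starProjection z‖ = ‖(K.starProjection - U.starProjection) z‖ := by
        rw [sub_apply, Submodule.starProjection_eq_self_iff.mpr hz, ← norm_neg, neg_sub]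
    _ ≤ _ := ContinuousLinearMap.le_opNorm _ _

theorem stmt5_general {m n : ℕ} (F : ℝ → ℝ) (hF : SparsenessMeasure F)
    (A : Matrix (Fin m) (Fin n) ℝ) (k : ℕ)
    (σmax : ℝ) (hσ : 0 < σmax)
    (hσA : ∀ u : EuclideanSpace ℝ (Fin n), ‖mulVecCLM A u‖ ≤ σmax * ‖u‖)
    (d : ℝ) (hd0 : 0 < d)
    (hrrc : RRC A k F (2 * (1 - 2*d) / (d * σmax))) :
    ∀ ν' : Submodule ℝ (EuclideanSpace ℝ (Fin n)),
      Module.finrank ℝ ν' = Module.finrank ℝ (LinearMap.ker (mulVecCLM A : EuclideanSpace ℝ (Fin n) →ₗ[ℝ] EuclideanSpace ℝ (Fin m))) →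
      ‖projCLM (LinearMap.ker (mulVecCLM A : EuclideanSpace ℝ (Fin n) →ₗ[ℝ] EuclideanSpace ℝ (Fin m))) - projCLM ν'‖ ≤ d →
      NSP ν' k F := by
  intro ν' _ hproj z hz hz0 T hT
  by_contra! hcost
  set K := LinearMap.ker (mulVecCLM A : EuclideanSpace ℝ (Fin n) →ₗ[ℝ] EuclideanSpace ℝ (Fin m))
  have hzpos : 0 < ‖z‖ := norm_pos_iff.mpr hz0
  have hAz : ‖mulVecCLM A z‖ ≤ 2 * (σmax * d * ‖z‖ / 2) := by
    have hker : mulVecCLM A (K.starProjection z) = 0 := (K.orthogonalProjectionOnto z).2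
    calc ‖mulVecCLM A z‖ = ‖mulVecCLM A (z - K.starProjection z)‖ := by
          rw [map_sub, hker, sub_zero]
      _ ≤ σmax * (‖K.starProjection - ν'.starProjection‖ * ‖z‖) :=
        (hσA _).trans (mul_le_mul_of_nonneg_left (norm_sub_starProjection_le_of_mem K ν' hz) hσ.le)
      _ ≤ σmax * (d * ‖z‖) := by gcongr; exact hproj
      _ = 2 * (σmax * d * ‖z‖ / 2) := by ring
  have h := hrrc.norm_le_of_costJT_compl_le hF.map_zero hT hcost (by positivity) hAz
  have hC : 2 * (1 - 2 * d) / (d * σmax) * (σmax * d * ‖z‖ / 2) = (1 - 2 * d) * ‖z‖ := by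
    field_simp
  rw [hC] at h
  nlinarith

/-- converse part of Theorem 3: if `‖A u‖ ≤ σmax ‖u‖` for all `u`,
`0 < d < 1/2`, and `A` satisfies RRC at sparsity `k` for `J` with constant
`C = 2(1−2d)/(d σmax)`, then every subspace `ν'` with `dim ν' = dim (ker A)` and
`‖P_{ker A} − P_{ν'}‖ ≤ d` satisfies NSP at sparsity `k` for `J`. -/
theorem stmt5 {m n : ℕ} (F : ℝ → ℝ) (hF : SparsenessMeasure F)
    (A : Matrix (Fin m) (Fin n) ℝ) (k : ℕ) (hk : 1 ≤ k)
    (σmax : ℝ) (hσ : 0 < σmax)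
    (hσA : ∀ u : EuclideanSpace ℝ (Fin n), ‖mulVecCLM A u‖ ≤ σmax * ‖u‖)
    (d : ℝ) (hd0 : 0 < d) (hd1 : d < 1/2)
    (hrrc : RRC A k F (2 * (1 - 2*d) / (d * σmax))) :
    ∀ ν' : Submodule ℝ (EuclideanSpace ℝ (Fin n)),
      Module.finrank ℝ ν' = Module.finrank ℝ (LinearMap.ker (mulVecCLM A : EuclideanSpace ℝ (Fin n) →ₗ[ℝ] EuclideanSpace ℝ (Fin m))) →
      ‖projCLM (LinearMap.ker (mulVecCLM A : EuclideanSpace ℝ (Fin n) →ₗ[ℝ] EuclideanSpace ℝ (Fin m))) - projCLM ν'‖ ≤ d →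
      NSP ν' k F :=
  stmt5_general F hF A k σmax hσ hσA d hd0 hrrc
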